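/- Let a, b be integers and c a positive integer, and set d = gcd(a,c). If d does not divide b, then G(a,b,c) = 0. -/

import Mathlib

/-!
Write `d = gcd(a,c)` and `c = d m`. Since `c ∣ a m`, the substitution `n ↦ n + m` multiplies
each term `e((a n² + b n)/c)` by `e(b m / c) = e(b / d)`, which is not `1` because `d ∤ b`.
The sum runs over a full system of residues mod `c`, so it is invariant under the substitution,
and hence it vanishes.
-/

/-- The generalized quadratic Gauss sum `G(a,b,c) = ∑_{n=0}^{c-1} e((a n² + b n)/c)`,
where `e(x) = exp(2πix)`. -/
noncomputable def gaussSumG (a b : ℤ) (c : ℕ) : ℂ :=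
  ∑ n ∈ Finset.range c,
    Complex.exp (2 * Real.pi * Complex.I * (((a : ℂ) * n ^ 2 + (b : ℂ) * n) / (c : ℂ)))

open Finset

theorem Fintype.sum_eq_zero_of_map_add_eq_mul {G R : Type*} [AddGroup G] [Fintype G] [Ring R]
    [NoZeroDivisors R] {f : G → R} {t : G} {ζ : R} (hζ : ζ ≠ 1)
    (hf : ∀ x, f (x + t) = ζ * f x) : ∑ x, f x = 0 :=
  eq_zero_of_mul_eq_self_left hζ <| by
    simpa only [mul_sum, hf] using (AddGroup.addRight_bijective t).sum_comp f

theorem ZMod.sum_range_natCast {M : Type*} [AddCommMonoid M] (N : ℕ) [NeZero N]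
    (f : ZMod N → M) : ∑ n ∈ range N, f n = ∑ x : ZMod N, f x :=
  sum_nbij' (↑) ZMod.val (by simp) (by simp [ZMod.val_lt])
    (fun _ hn ↦ ZMod.val_cast_of_lt (mem_range.1 hn)) (fun x _ ↦ ZMod.natCast_zmod_val x)
    (fun _ _ ↦ rfl)

theorem gaussSumG_eq_sum_stdAddChar (a b : ℤ) (c : ℕ) [NeZero c] :
    gaussSumG a b c =
      ∑ x : ZMod c, ZMod.stdAddChar ((a : ZMod c) * x ^ 2 + (b : ZMod c) * x) := by
  rw [gaussSumG, ← ZMod.sum_range_natCast]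
  refine sum_congr rfl fun n _ ↦ ?_
  have h := ZMod.stdAddChar_coe (N := c) (a * n ^ 2 + b * n)
  push_cast at h
  rw [h, mul_div_assoc]

theorem AddChar.sum_quadratic_eq_zero {R M : Type*} [CommRing R] [Fintype R] [Ring M]
    [NoZeroDivisors M] (ψ : AddChar R M) {a t : R} (b : R) (hat : a * t = 0)
    (hbt : ψ (b * t) ≠ 1) : ∑ x, ψ (a * x ^ 2 + b * x) = 0 := by
  refine Fintype.sum_eq_zero_of_map_add_eq_mul (t := t) hbt fun x ↦ ?_
  rw [← AddChar.map_add_eq_mul]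
  congr 1
  linear_combination (2 * x + t) * hat

/-- If `d = gcd(a,c)` does not divide `b`, then `G(a,b,c) = 0`. -/
theorem gauss_sum_eq_zero_of_not_dvd (a b : ℤ) (c : ℕ) (hc : 0 < c)
    (h : ¬ ((Int.gcd a c : ℤ) ∣ b)) : gaussSumG a b c = 0 := by
  have : NeZero c := ⟨hc.ne'⟩
  set d := Int.gcd a c
  obtain ⟨m, hcm⟩ : d ∣ c := Nat.gcd_dvd_right a.natAbs c
  obtain ⟨a', ha⟩ : (d : ℤ) ∣ a := Int.gcd_dvd_left a c
  have hm : m ≠ 0 := by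
    rintro rfl
    simp [hcm] at hc
  rw [gaussSumG_eq_sum_stdAddChar]
  refine (ZMod.stdAddChar (N := c)).sum_quadratic_eq_zero (t := (m : ZMod c)) _ ?_ ?_
  · have ham : ((a * m : ℤ) : ZMod c) = ((a' * c : ℤ) : ZMod c) := by
      rw [ha, hcm]
      push_cast
      ring
    push_cast at ham
    rw [ham, ZMod.natCast_self, mul_zero]
  · rw [← (ZMod.stdAddChar (N := c)).map_zero_eq_one, ZMod.injective_stdAddChar.ne_iff]
    have hbm : ¬ (c : ℤ) ∣ b * m := by
      rwa [hcm, Nat.cast_mul, Int.mul_dvd_mul_iff_right (Int.natCast_ne_zero.2 hm)]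
    rwa [← Int.cast_natCast, ← Int.cast_mul, Ne, ZMod.intCast_zmod_eq_zero_iff_dvd]
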